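/- For every function f : ℕ → ℕ and every k ∈ ℕ, there exists m ∈ ℕ such that there is no (k, f)-simple strictly descending sequence (b_0, …, b_m) of length m in B_3^+; that is, every (k, f)-simple descending sequence (b_0, …, b_{m'}) satisfies m' < m. -/

import Mathlib

namespace Braid3

/-! ### The positive 3-strand braid monoid
presented by σ1, σ2 (letters `0`, `1` of `Fin 2`) with the relation σ1σ2σ1 = σ2σ1σ2. -/

def braidRel : FreeMonoid (Fin 2) → FreeMonoid (Fin 2) → Prop := fun u v =>
  u = FreeMonoid.of 0 * FreeMonoid.of 1 * FreeMonoid.of 0 ∧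
  v = FreeMonoid.of 1 * FreeMonoid.of 0 * FreeMonoid.of 1

def braidCon : Con (FreeMonoid (Fin 2)) := conGen braidRel

/-- The positive 3-strand braid monoid `B₃⁺`. -/
abbrev B3P := braidCon.Quotient

/-- The element of `B₃⁺` represented by a word on the alphabet {σ1, σ2}. -/
def mkw (w : List (Fin 2)) : B3P := braidCon.mk' (FreeMonoid.ofList w)

/-- σ1 as an element of B₃⁺. -/
def s1 : B3P := mkw [0]
/-- σ2 as an element of B₃⁺. -/
def s2 : B3P := mkw [1]
/-- Garside's fundamental braid Δ₃ = σ1σ2σ1. -/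
def Δ : B3P := mkw [0, 1, 0]

/-! ### The 3-strand braid group B₃, with the same presentation. -/

def grpRels : Set (FreeGroup (Fin 2)) :=
  { FreeGroup.of 0 * FreeGroup.of 1 * FreeGroup.of 0 *
    (FreeGroup.of 1 * FreeGroup.of 0 * FreeGroup.of 1)⁻¹ }

abbrev B3 := PresentedGroup grpRels

def g (i : Fin 2) : B3 := PresentedGroup.of i

theorem grp_braid_rel : g 0 * g 1 * g 0 = g 1 * g 0 * g 1 := by
  show (QuotientGroup.mk (FreeGroup.of 0 * FreeGroup.of 1 * FreeGroup.of 0) : B3)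
      = QuotientGroup.mk (FreeGroup.of 1 * FreeGroup.of 0 * FreeGroup.of 1)
  rw [QuotientGroup.eq]
  have h : (FreeGroup.of 0 * FreeGroup.of 1 * FreeGroup.of 0 *
      (FreeGroup.of 1 * FreeGroup.of 0 * FreeGroup.of 1)⁻¹ : FreeGroup (Fin 2)) ∈
      Subgroup.normalClosure grpRels :=
    Subgroup.subset_normalClosure rfl
  have h2 := (Subgroup.normalClosure_normal (s := grpRels)).conj_mem _ h
      (FreeGroup.of 0 * FreeGroup.of 1 * FreeGroup.of 0)⁻¹
  simp only [inv_inv] at h2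
  have h3 : ((FreeGroup.of 0 * FreeGroup.of 1 * FreeGroup.of 0 : FreeGroup (Fin 2)))⁻¹ *
      (FreeGroup.of 0 * FreeGroup.of 1 * FreeGroup.of 0 *
        (FreeGroup.of 1 * FreeGroup.of 0 * FreeGroup.of 1)⁻¹) *
      (FreeGroup.of 0 * FreeGroup.of 1 * FreeGroup.of 0) =
      ((FreeGroup.of 0 * FreeGroup.of 1 * FreeGroup.of 0 : FreeGroup (Fin 2))⁻¹ *
        (FreeGroup.of 1 * FreeGroup.of 0 * FreeGroup.of 1))⁻¹ := by
    group
  rw [h3] at h2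
  exact (Subgroup.inv_mem_iff _).mp h2

/-- The canonical embedding of B₃⁺ into B₃. -/
def ι : B3P →* B3 :=
  Con.lift _ (FreeMonoid.lift fun i => g i) (by
    apply Con.conGen_le.mpr
    rintro u v ⟨hu, hv⟩
    subst hu; subst hv
    rw [Con.ker_rel]
    simp only [map_mul, FreeMonoid.lift_eval_of]
    exact grp_braid_rel)

/-! ### The braid order -/

/-- Evaluation in B₃ of a word on the letters σ1^{±1}, σ2^{±1}
(a letter `(i, true)` is σ_{i+1}, a letter `(i, false)` is σ_{i+1}⁻¹). -/
def evalSW (w : List (Fin 2 × Bool)) : B3 :=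
  (w.map fun l => if l.2 then g l.1 else (g l.1)⁻¹).prod

/-- A signed word is σ-positive if the generator of highest occurring index occurs,
and occurs only positively. -/
def SigmaPos (w : List (Fin 2 × Bool)) : Prop :=
  ∃ i : Fin 2, (i, true) ∈ w ∧ (i, false) ∉ w ∧ ∀ l ∈ w, l.1 ≤ i

/-- The braid order on the group B₃. -/
def gLt (a b : B3) : Prop := ∃ w, SigmaPos w ∧ evalSW w = a⁻¹ * b

/-- The braid order on B₃⁺. -/
def blt (a b : B3P) : Prop := gLt (ι a) (ι b)

def ble (a b : B3P) : Prop := blt a b ∨ a = b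

/-! ### ϕ-normal words and exponent sequences -/

/-- The minimal legal sizes e_k^min. -/
def emin : ℕ → ℕ
  | 1 => 0
  | 2 => 1
  | _ => 2

/-- The letter of the k-th block (1-based, from the right): σ1 for odd k, σ2 for even k. -/
def letterOf (k : ℕ) : Fin 2 := if k % 2 = 1 then 0 else 1

/-- The word σ_{[p]}^{e_p} ⋯ σ2^{e_2} σ1^{e_1} associated with the exponent
sequence `E = [e_p, …, e_1]`. -/
def wordOfExpSeq : List ℕ → List (Fin 2)
  | [] => []
  | e :: rest => List.replicate e (letterOf (rest.length + 1)) ++ wordOfExpSeq rest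

/-- `expAt E k` is e_k, the k-th entry of the exponent sequence counted from the right,
1-based. -/
def expAt (E : List ℕ) (k : ℕ) : ℕ := E.getD (E.length - k) 0

/-- `E = [e_p, …, e_1]` is the exponent sequence of a ϕ-normal word: the final block
decomposition is minimal (leading exponent nonzero) and e_k ≥ e_k^min for k < p. -/
def IsNormalSeq (E : List ℕ) : Prop :=
  E ≠ [] ∧ 1 ≤ expAt E E.length ∧ ∀ k, 1 ≤ k → k < E.length → emin k ≤ expAt E k

/-- A word on {σ1, σ2} is ϕ-normal if its (minimal) block decomposition
σ_{[p]}^{e_p} ⋯ σ2^{e_2} σ1^{e_1} satisfies e_k ≥ e_k^min for k < p. -/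
def IsPhiNormalWord (w : List (Fin 2)) : Prop :=
  ∃ E, IsNormalSeq E ∧ w = wordOfExpSeq E

/-- `E` is the exponent sequence of the braid `b`. -/
def HasExpSeq (b : B3P) (E : List ℕ) : Prop :=
  IsNormalSeq E ∧ mkw (wordOfExpSeq E) = b

/-- The exponent sequence of a (nontrivial) braid of B₃⁺. -/
noncomputable def expSeqOf (b : B3P) : List ℕ := by
  classical exact if h : ∃ E, HasExpSeq b E then h.choose else []

/-- The critical position of an exponent sequence: the least r < p with e_r > e_r^min
if it exists, and p otherwise. -/
noncomputable def critPos (E : List ℕ) : ℕ := by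
  classical exact
    if h : ∃ r, 1 ≤ r ∧ r < E.length ∧ emin r < expAt E r then Nat.find h else E.length

/-- The effect of the operation b ↦ b{t} on exponent sequences: remove one letter from
the critical block, and add t letters to the next block if the latter exists. -/
noncomputable def stepSeq (E : List ℕ) (t : ℕ) : List ℕ :=
  let p := E.length
  let r := critPos E
  let E1 := E.set (p - r) (expAt E r - 1)
  if 2 ≤ r then E1.set (p - (r - 1)) (expAt E (r - 1) + t) else E1

/-- The operation b ↦ b{t} of Definition 2.2 (with 1{t} = 1). -/
noncomputable def step (b : B3P) (t : ℕ) : B3P := by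
  classical exact if b = 1 then 1 else mkw (wordOfExpSeq (stepSeq (expSeqOf b) t))

/-- The G₃-sequence from b: `gseq b 0 = b`, `gseq b t = (gseq b (t-1)){t}`. -/
noncomputable def gseq (b : B3P) : ℕ → B3P
  | 0 => b
  | t + 1 => step (gseq b t) (t + 1)

/-- T(b): the length of the G₃-sequence from b, i.e. the least t with b{1}{2}⋯{t} = 1. -/
noncomputable def T (b : B3P) : ℕ := sInf {t | gseq b t = 1}

/-! ### The ordinal of a 3-braid, fundamental sequences, the Hardy hierarchy -/

open Ordinal in
/-- Sum Σ ω^{k-1}·(e_k − e_k^min) over the tail of an exponent sequence. -/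
noncomputable def ordSeqAux : List ℕ → Ordinal
  | [] => 0
  | e :: rest =>
    omega0 ^ (rest.length : Ordinal) * ((e - emin (rest.length + 1) : ℕ) : Ordinal)
      + ordSeqAux rest

open Ordinal in
/-- ord of an exponent sequence (e_p, …, e_1):
ω^{p−1}·e_p + Σ_{p>k≥1} ω^{k−1}·(e_k − e_k^min). -/
noncomputable def ordSeq : List ℕ → Ordinal
  | [] => 0
  | e :: rest => omega0 ^ (rest.length : Ordinal) * (e : Ordinal) + ordSeqAux rest

/-- The ordinal ord(b) < ω^ω attached to a braid of B₃⁺ (with ord(1) = 0). -/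
noncomputable def ordOf (b : B3P) : Ordinal := ordSeq (expSeqOf b)

open Ordinal in
/-- Fundamental sequences: 0[x] = 0, (α+1)[x] = α, (γ + ω^{r+1})[x] = γ + ω^r·x
(CNF decomposition), and (ω^ω)[x] = ω^x. -/
noncomputable def fundSeq (α : Ordinal) (x : ℕ) : Ordinal :=
  open scoped Classical in
  if α = 0 then 0
  else if h : ∃ β, α = β + 1 then h.choose
  else if α = omega0 ^ omega0 then omega0 ^ (x : Ordinal)
  else if h : ∃ p : Ordinal × ℕ, α = p.1 + omega0 ^ ((p.2 : Ordinal) + 1) ∧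
      omega0 ^ ((p.2 : Ordinal) + 1) ∣ p.1
    then h.choose.1 + omega0 ^ (h.choose.2 : Ordinal) * (x : Ordinal)
  else 0

open Ordinal in
theorem fundSeq_lt (α : Ordinal) (x : ℕ) (h0 : ¬α = 0) (hs : ¬∃ β, α = β + 1) :
    fundSeq α x < α := by
  classical
  rw [fundSeq]
  rw [if_neg h0, dif_neg hs]
  by_cases hw : α = omega0 ^ omega0
  · rw [if_pos hw, hw]
    exact (Ordinal.opow_lt_opow_iff_right Ordinal.one_lt_omega0).mpr (Ordinal.nat_lt_omega0 x)
  · rw [if_neg hw]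
    by_cases hd : ∃ p : Ordinal × ℕ, α = p.1 + omega0 ^ ((p.2 : Ordinal) + 1) ∧
        omega0 ^ ((p.2 : Ordinal) + 1) ∣ p.1
    · rw [dif_pos hd]
      obtain ⟨hα, -⟩ := hd.choose_spec
      have hlt : omega0 ^ ((hd.choose.2 : Ordinal)) * (x : Ordinal)
          < omega0 ^ ((hd.choose.2 : Ordinal) + 1) := by
        rw [Ordinal.add_one_eq_succ, Ordinal.opow_succ]
        exact mul_lt_mul_of_pos_left
          (Ordinal.natCast_lt_omega0 x) (Ordinal.opow_pos _ Ordinal.omega0_pos)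
      calc hd.choose.1 + omega0 ^ (hd.choose.2 : Ordinal) * (x : Ordinal)
          < hd.choose.1 + omega0 ^ ((hd.choose.2 : Ordinal) + 1) :=
            (add_lt_add_iff_left _).mpr hlt
        _ = α := hα.symm
    · rw [dif_neg hd]
      exact pos_iff_ne_zero.mpr h0

open Ordinal in
open scoped Classical in
/-- The Hardy hierarchy: H_0(x) = x, H_{α+1}(x) = H_α(x+1), H_λ(x) = H_{λ[x]}(x+1). -/
noncomputable def hardy (α : Ordinal) (x : ℕ) : ℕ :=
  if α = 0 then x
  else if h : ∃ β, α = β + 1 then hardy h.choose (x + 1)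
  else hardy (fundSeq α x) (x + 1)
termination_by α
decreasing_by
  · have hs := h.choose_spec
    have h2 : h.choose < h.choose + 1 := by
      rw [Ordinal.add_one_eq_succ]; exact Order.lt_succ _
    exact lt_of_lt_of_eq h2 hs.symm
  · exact fundSeq_lt _ _ (by assumption) (by assumption)

/-! ### Garside complexity -/

/-- The Garside complexity ‖b‖: the least ℓ such that b left-divides Δ₃^ℓ. -/
noncomputable def compl (b : B3P) : ℕ := sInf {ℓ | ∃ c, b * c = Δ ^ ℓ}

/-!
Laver's theorem for `B₃⁺`: the braid order has no infinite descending chain there. `B₃` acts on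
`ℚ` by order automorphisms in which `σ1` fixes `1/2`, `σ2` moves `1/2` up, and both generators move
every point up. Hence `b ↦ (b • 1/2, exponent sum of b)` is strictly increasing from the braid order
to the lexicographic order, and increasing along the subword order on positive words, which is a
well-quasi-order by Higman's lemma.

Braids of complexity at most `C` are left divisors of `Δ₃^C`, of which there are finitely many
(they have length at most `3C`), so König's lemma turns arbitrarily long `(k, f)`-simple
descending sequences into an infinite descending chain.
-/

lemma mkw_append (w₁ w₂ : List (Fin 2)) : mkw (w₁ ++ w₂) = mkw w₁ * mkw w₂ := by
  rw [mkw, FreeMonoid.ofList_append, map_mul]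
  rfl

lemma mkw_cons (i : Fin 2) (w : List (Fin 2)) : mkw (i :: w) = mkw [i] * mkw w :=
  mkw_append [i] w

lemma mkw_surjective : Function.Surjective mkw := fun b => by
  obtain ⟨z, rfl⟩ := Con.mk'_surjective (c := braidCon) b
  exact ⟨FreeMonoid.toList z, congrArg _ (FreeMonoid.ofList_toList z)⟩

lemma ι_mkw_singleton (i : Fin 2) : ι (mkw [i]) = g i :=
  (Con.lift_mk' _ _).trans (FreeMonoid.lift_eval_of _ i)

lemma B3P.induction_on {p : B3P → Prop} (b : B3P) (one : p 1)
    (mul : ∀ i b, p b → p (mkw [i] * b)) : p b := by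
  obtain ⟨w, rfl⟩ := mkw_surjective b
  induction w with
  | nil => exact one
  | cons i w ih => rw [mkw_cons]; exact mul i _ ih

noncomputable def expSum : B3 →* Multiplicative ℤ :=
  PresentedGroup.toGroup (f := fun _ => Multiplicative.ofAdd 1) (by
    rintro r rfl
    simp only [map_mul, map_inv, FreeGroup.lift_apply_of]
    group)

lemma expSum_g (i : Fin 2) : expSum (g i) = Multiplicative.ofAdd 1 :=
  PresentedGroup.toGroup.of _

lemma toAdd_expSum_ι_mkw (w : List (Fin 2)) : (expSum (ι (mkw w))).toAdd = w.length := by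
  induction w with
  | nil => rfl
  | cons i w ih =>
    rw [mkw_cons, map_mul, map_mul, toAdd_mul, ih, ι_mkw_singleton, expSum_g, toAdd_ofAdd,
      List.length_cons]
    push_cast
    ring

def phi (x : ℚ) : ℚ := if x < 1 / 4 then x + 1 / 4 else if x < 1 / 2 then 2 * x else x / 2 + 3 / 4

def beta (x : ℚ) : ℚ := ⌊x⌋ + phi (Int.fract x)

lemma beta_eq_of_le_of_lt {n : ℤ} {x : ℚ} (h₁ : n ≤ x) (h₂ : x < n + 1) :
    beta x = n + phi (x - n) := by
  have hn : ⌊x⌋ = n := Int.floor_eq_iff.2 ⟨h₁, h₂⟩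
  rw [beta, Int.fract, hn]

lemma beta_eq_add_quarter {n : ℤ} {x : ℚ} (h₁ : n ≤ x) (h₂ : x < n + 1 / 4) :
    beta x = x + 1 / 4 := by
  rw [beta_eq_of_le_of_lt h₁ (by linarith), phi, if_pos (by linarith)]
  ring

lemma beta_eq_two_mul_sub {n : ℤ} {x : ℚ} (h₁ : n + 1 / 4 ≤ x) (h₂ : x < n + 1 / 2) :
    beta x = 2 * x - n := by
  rw [beta_eq_of_le_of_lt (n := n) (by linarith) (by linarith), phi,
    if_neg (by linarith), if_pos (by linarith)]
  ring

lemma beta_eq_half_add {n : ℤ} {x : ℚ} (h₁ : n + 1 / 2 ≤ x) (h₂ : x < n + 1) :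
    beta x = x / 2 + n / 2 + 3 / 4 := by
  rw [beta_eq_of_le_of_lt (n := n) (by linarith) h₂, phi, if_neg (by linarith),
    if_neg (by linarith)]
  ring

lemma beta_half : beta (1 / 2) = 1 := by
  rw [beta_eq_half_add (n := 0) (by norm_num) (by norm_num)]
  norm_num

lemma beta_one : beta 1 = 5 / 4 := by
  rw [beta_eq_add_quarter (n := 1) (by norm_num) (by norm_num)]
  norm_num

lemma beta_beta_beta (x : ℚ) : beta (beta (beta x)) = x + 1 := by
  have h₁ := Int.floor_le x
  have h₂ := Int.lt_floor_add_one x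
  set n := ⌊x⌋
  rcases lt_or_ge x (n + 1 / 4) with hx | hx
  · rw [beta_eq_add_quarter h₁ hx,
      beta_eq_two_mul_sub (x := x + 1 / 4) (n := n) (by linarith) (by linarith),
      beta_eq_half_add (x := 2 * (x + 1 / 4) - n) (n := n) (by linarith) (by linarith)]
    ring
  rcases lt_or_ge x (n + 1 / 2) with hx' | hx'
  · rw [beta_eq_two_mul_sub hx hx',
      beta_eq_half_add (x := 2 * x - n) (n := n) (by linarith) (by linarith),
      beta_eq_add_quarter (x := (2 * x - n) / 2 + n / 2 + 3 / 4) (n := n + 1)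
        (by push_cast; linarith) (by push_cast; linarith)]
    ring
  · rw [beta_eq_half_add hx' h₂,
      beta_eq_add_quarter (x := x / 2 + n / 2 + 3 / 4) (n := n + 1)
        (by push_cast; linarith) (by push_cast; linarith),
      beta_eq_two_mul_sub (x := x / 2 + n / 2 + 3 / 4 + 1 / 4) (n := n + 1)
        (by push_cast; linarith) (by push_cast; linarith)]
    push_cast
    ring

lemma beta_le (x : ℚ) : beta x ≤ x + 1 / 2 := by
  rw [beta_eq_of_le_of_lt (Int.floor_le x) (Int.lt_floor_add_one x), phi]
  split_ifs <;> linarith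

lemma beta_strictMono : StrictMono beta := by
  have phi_bounds : ∀ y : ℚ, 0 ≤ y → y < 1 → 1 / 4 ≤ phi y ∧ phi y < 5 / 4 := by
    intro y h₀ h₁
    unfold phi
    split_ifs <;> constructor <;> linarith
  intro x y hxy
  rcases lt_or_ge ⌊x⌋ ⌊y⌋ with h | h
  · have hx := phi_bounds _ (Int.fract_nonneg x) (Int.fract_lt_one x)
    have hy := phi_bounds _ (Int.fract_nonneg y) (Int.fract_lt_one y)
    have h' : (⌊x⌋ : ℚ) + 1 ≤ ⌊y⌋ := by exact_mod_cast h
    unfold beta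
    linarith
  · have heq : ⌊x⌋ = ⌊y⌋ := le_antisymm (Int.floor_le_floor hxy.le) h
    have hfract : Int.fract x < Int.fract y := by
      unfold Int.fract
      rw [heq]
      linarith
    have := Int.fract_nonneg x
    have := Int.fract_lt_one y
    have hphi : phi (Int.fract x) < phi (Int.fract y) := by
      unfold phi
      split_ifs <;> linarith
    unfold beta
    rw [heq]
    linarith

noncomputable def betaIso : ℚ ≃o ℚ :=
  StrictMono.orderIsoOfSurjective beta beta_strictMono fun x =>
    ⟨beta (beta (x - 1)), by rw [beta_beta_beta, sub_add_cancel]⟩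

def shiftIso : ℚ ≃o ℚ := OrderIso.addRight (1 / 2)

lemma betaIso_apply (x : ℚ) : betaIso x = beta x := rfl

lemma shiftIso_apply (x : ℚ) : shiftIso x = x + 1 / 2 := rfl

lemma shiftIso_sq : shiftIso ^ 2 = betaIso ^ 3 := by
  ext x
  simp only [pow_succ, pow_zero, one_mul, RelIso.mul_apply, shiftIso_apply, betaIso_apply,
    beta_beta_beta]
  ring

/- `B₃ = ⟨a, b | a² = b³⟩` with `a = Δ₃` and `b = σ1σ2`, so `σ1 = b⁻¹a` and `σ2 = a⁻¹b²`;
`shiftIso` and `betaIso` lift circle maps of order 2 and 3, with `shiftIso ^ 2 = betaIso ^ 3`. -/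
noncomputable def sigma1Iso : ℚ ≃o ℚ := betaIso⁻¹ * shiftIso

noncomputable def sigma2Iso : ℚ ≃o ℚ := shiftIso⁻¹ * betaIso ^ 2

lemma sigmaIso_braid : sigma1Iso * sigma2Iso * sigma1Iso = sigma2Iso * sigma1Iso * sigma2Iso := by
  have h : sigma2Iso * sigma1Iso * sigma2Iso = shiftIso⁻¹ * betaIso ^ 3 := by
    simp only [sigma1Iso, sigma2Iso]
    group
  rw [h, ← shiftIso_sq, sigma1Iso, sigma2Iso]
  group

noncomputable def rho : B3 →* (ℚ ≃o ℚ) :=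
  PresentedGroup.toGroup (f := ![sigma1Iso, sigma2Iso]) (by
    rintro r rfl
    simp only [map_mul, map_inv, FreeGroup.lift_apply_of]
    exact mul_inv_eq_one.2 sigmaIso_braid)

lemma rho_g_zero : rho (g 0) = sigma1Iso := PresentedGroup.toGroup.of _

lemma rho_g_one : rho (g 1) = sigma2Iso := PresentedGroup.toGroup.of _

lemma shiftIso_inv_apply (x : ℚ) : shiftIso⁻¹ x = x - 1 / 2 :=
  shiftIso.symm_apply_eq.2 (sub_add_cancel x _).symm

lemma sigma1Iso_apply (x : ℚ) : sigma1Iso x = betaIso⁻¹ (x + 1 / 2) := rfl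

lemma sigma2Iso_apply (x : ℚ) : sigma2Iso x = beta (beta x) - 1 / 2 := by
  rw [sigma2Iso, RelIso.mul_apply, shiftIso_inv_apply, pow_two, RelIso.mul_apply]
  rfl

lemma rho_g_zero_half : rho (g 0) (1 / 2) = 1 / 2 := by
  rw [rho_g_zero, sigma1Iso_apply, add_halves]
  exact betaIso.symm_apply_eq.2 beta_half.symm

lemma half_lt_rho_g_one_half : 1 / 2 < rho (g 1) (1 / 2) := by
  rw [rho_g_one, sigma2Iso_apply, beta_half, beta_one]
  norm_num

lemma le_rho_g (i : Fin 2) (x : ℚ) : x ≤ rho (g i) x := by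
  match i with
  | 0 =>
    rw [rho_g_zero, sigma1Iso_apply]
    exact betaIso.le_symm_apply.2 (beta_le x)
  | 1 =>
    have := beta_le (beta (beta x))
    rw [beta_beta_beta] at this
    rw [rho_g_one, sigma2Iso_apply]
    linarith

lemma evalSW_cons (l : Fin 2 × Bool) (w : List (Fin 2 × Bool)) :
    evalSW (l :: w) = (if l.2 then g l.1 else (g l.1)⁻¹) * evalSW w := by
  rw [evalSW, List.map_cons, List.prod_cons, evalSW]

lemma evalSW_append (u v : List (Fin 2 × Bool)) : evalSW (u ++ v) = evalSW u * evalSW v := by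
  rw [evalSW, List.map_append, List.prod_append, evalSW, evalSW]

lemma half_le_rho_evalSW {w : List (Fin 2 × Bool)} (hw : ((1 : Fin 2), false) ∉ w) :
    1 / 2 ≤ rho (evalSW w) (1 / 2) := by
  induction w with
  | nil => exact le_rfl
  | cons l w ih =>
    obtain ⟨hl, hw⟩ := not_or.1 (List.mem_cons.not.1 hw)
    rw [evalSW_cons, map_mul, RelIso.mul_apply]
    refine le_trans ?_ ((rho _).monotone (ih hw))
    match l with
    | (0, true) => exact rho_g_zero_half.ge
    | (0, false) =>
      rw [if_neg Bool.false_ne_true, map_inv]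
      exact ((rho (g 0)).symm_apply_eq.2 rho_g_zero_half.symm).ge
    | (1, true) => exact half_lt_rho_g_one_half.le
    | (1, false) => exact absurd rfl hl

lemma half_lt_rho_evalSW {w : List (Fin 2 × Bool)} (hw : ((1 : Fin 2), false) ∉ w)
    (hw' : ((1 : Fin 2), true) ∈ w) : 1 / 2 < rho (evalSW w) (1 / 2) := by
  obtain ⟨u, v, rfl⟩ := List.append_of_mem hw'
  have hu : ((1 : Fin 2), false) ∉ u := fun h => hw (List.mem_append_left _ h)
  have hv : ((1 : Fin 2), false) ∉ v := fun h => hw (List.mem_append_right _ (.tail _ h))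
  rw [evalSW_append, evalSW_cons, map_mul, map_mul, RelIso.mul_apply, RelIso.mul_apply]
  calc (1 / 2 : ℚ) ≤ rho (evalSW u) (1 / 2) := half_le_rho_evalSW hu
    _ < rho (evalSW u) (rho (g 1) (1 / 2)) := (rho _).strictMono half_lt_rho_g_one_half
    _ ≤ _ := (rho _).monotone ((rho _).monotone (half_le_rho_evalSW hv))

noncomputable def orbitKey (b : B3P) : ℚ ×ₗ ℤ :=
  toLex (rho (ι b) (1 / 2), (expSum (ι b)).toAdd)

lemma evalSW_replicate (n : ℕ) (l : Fin 2 × Bool) :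
    evalSW (List.replicate n l) = (if l.2 then g l.1 else (g l.1)⁻¹) ^ n := by
  rw [evalSW, List.map_replicate, List.prod_replicate]

lemma rho_g_zero_pow_half (n : ℕ) : rho (g 0 ^ n) (1 / 2) = 1 / 2 := by
  induction n with
  | zero => rfl
  | succ n ih => rw [pow_succ, map_mul, RelIso.mul_apply, rho_g_zero_half, ih]

lemma orbitKey_lt_of_blt {x y : B3P} (h : blt x y) : orbitKey x < orbitKey y := by
  obtain ⟨w, ⟨i, hpos, hneg, hmax⟩, hw⟩ := h
  have hy : ι y = ι x * evalSW w := by rw [hw, mul_inv_cancel_left]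
  rw [orbitKey, orbitKey, hy, Prod.Lex.toLex_lt_toLex, map_mul, RelIso.mul_apply, map_mul,
    toAdd_mul]
  match i with
  | 0 =>
    have hw0 : w = List.replicate w.length (0, true) := by
      refine List.eq_replicate_iff.2 ⟨rfl, fun l hl => ?_⟩
      have hl₁ : l.1 = 0 := Fin.le_zero_iff.1 (hmax l hl)
      cases hl₂ : l.2
      · exact absurd ((Prod.ext hl₁ hl₂ : l = (0, false)) ▸ hl) hneg
      · exact Prod.ext hl₁ hl₂
    have hlen : 0 < w.length := List.length_pos_of_mem hpos
    rw [hw0, evalSW_replicate, if_pos rfl, rho_g_zero_pow_half, map_pow, expSum_g, ← ofAdd_nsmul,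
      toAdd_ofAdd]
    exact Or.inr ⟨rfl, by simpa using hlen⟩
  | 1 => exact Or.inl ((rho (ι x)).strictMono (half_lt_rho_evalSW hneg hpos))

lemma rho_ι_mkw_le_of_sublist {w w' : List (Fin 2)} (h : w.Sublist w') (x : ℚ) :
    rho (ι (mkw w)) x ≤ rho (ι (mkw w')) x := by
  induction h with
  | slnil => exact le_rfl
  | @cons l₁ l₂ i _ ih =>
    rw [mkw_cons i l₂, map_mul, map_mul, RelIso.mul_apply, ι_mkw_singleton]
    exact ih.trans (le_rho_g i _)
  | @cons_cons l₁ l₂ i _ ih =>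
    rw [mkw_cons i l₁, mkw_cons i l₂, map_mul, map_mul, map_mul, map_mul, RelIso.mul_apply,
      RelIso.mul_apply]
    exact (rho (ι (mkw [i]))).monotone ih

lemma orbitKey_mkw_le_of_sublist {w w' : List (Fin 2)} (h : w.Sublist w') :
    orbitKey (mkw w) ≤ orbitKey (mkw w') :=
  Prod.Lex.toLex_mono ⟨rho_ι_mkw_le_of_sublist h _, by
    simp only [toAdd_expSum_ι_mkw, Nat.cast_le]
    exact h.length_le⟩

theorem wellFounded_blt : WellFounded blt := by
  refine wellFounded_iff_isEmpty_descending_chain.2 ⟨fun ⟨d, hd⟩ => ?_⟩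
  choose w hw using fun t => mkw_surjective (d t)
  have higman := (Set.finite_univ (α := Fin 2)).partiallyWellOrderedOn (r := (· = ·))
    |>.partiallyWellOrderedOn_sublistForall₂
  obtain ⟨m, n, hmn, hsub⟩ := higman.exists_lt (f := w) fun _ _ _ => Set.mem_univ _
  obtain ⟨l, hl, hsub⟩ := List.sublistForall₂_iff.1 hsub
  rw [List.forall₂_eq_eq_eq] at hl
  have hle : orbitKey (d m) ≤ orbitKey (d n) := by
    rw [← hw, ← hw, hl]
    exact orbitKey_mkw_le_of_sublist hsub
  have hlt : orbitKey (d n) < orbitKey (d m) :=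
    (strictAnti_nat_of_succ_lt (f := orbitKey ∘ d) fun t => orbitKey_lt_of_blt (hd t)) hmn
  exact hle.not_gt hlt

lemma mkw_braid : mkw [0, 1, 0] = mkw [1, 0, 1] :=
  (Con.eq braidCon).2 (ConGen.Rel.of _ _ ⟨rfl, rfl⟩)

lemma commute_mkw_singleton_Δ_sq (i : Fin 2) : Commute (mkw [i]) (Δ ^ 2) := by
  rw [commute_iff_eq]
  have h0 : mkw [0] * Δ = Δ * mkw [1] :=
    calc mkw [0] * Δ = mkw [0] * mkw [1, 0, 1] := by rw [Δ, mkw_braid]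
      _ = Δ * mkw [1] := by rw [← mkw_append, Δ, ← mkw_append]; rfl
  have h1 : mkw [1] * Δ = Δ * mkw [0] :=
    calc mkw [1] * Δ = mkw [1, 0, 1] * mkw [0] := by rw [Δ, ← mkw_append, ← mkw_append]; rfl
      _ = Δ * mkw [0] := by rw [Δ, mkw_braid]
  match i with
  | 0 => rw [pow_two, ← mul_assoc, h0, mul_assoc, h1, mul_assoc]
  | 1 => rw [pow_two, ← mul_assoc, h1, mul_assoc, h0, mul_assoc]

lemma exists_mkw_singleton_mul_eq_Δ (i : Fin 2) : ∃ c, mkw [i] * c = Δ := by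
  match i with
  | 0 => exact ⟨mkw [1, 0], by rw [← mkw_append]; rfl⟩
  | 1 => exact ⟨mkw [0, 1], by rw [← mkw_append, Δ, mkw_braid]; rfl⟩

lemma exists_mul_eq_Δ_pow (b : B3P) : ∃ ℓ c, b * c = Δ ^ ℓ := by
  induction b using B3P.induction_on with
  | one => exact ⟨0, 1, by rw [mul_one, pow_zero]⟩
  | mul i b ih =>
    obtain ⟨ℓ, c, hc⟩ := ih
    obtain ⟨d, hd⟩ := exists_mkw_singleton_mul_eq_Δ i
    refine ⟨2 * ℓ + 2, c * Δ ^ ℓ * d * Δ, ?_⟩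
    have hcomm : Commute (mkw [i]) (Δ ^ (2 * ℓ)) := by
      rw [pow_mul]
      exact (commute_mkw_singleton_Δ_sq i).pow_right ℓ
    calc mkw [i] * b * (c * Δ ^ ℓ * d * Δ) = mkw [i] * Δ ^ (2 * ℓ) * d * Δ := by
          rw [two_mul, pow_add, ← hc]
          simp only [mul_assoc]
      _ = Δ ^ (2 * ℓ) * (mkw [i] * d) * Δ := by rw [hcomm.eq, mul_assoc (Δ ^ _)]
      _ = Δ ^ (2 * ℓ + 2) := by rw [hd, mul_assoc, ← pow_two, pow_add]

lemma mul_eq_Δ_pow_of_compl_le {b : B3P} {C : ℕ} (h : compl b ≤ C) : ∃ c, b * c = Δ ^ C := by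
  obtain ⟨c, hc⟩ := Nat.sInf_mem (s := {ℓ | ∃ c, b * c = Δ ^ ℓ}) (exists_mul_eq_Δ_pow b)
  refine ⟨c * Δ ^ (C - compl b), ?_⟩
  rw [← mul_assoc, hc, ← pow_add]
  exact congrArg _ (Nat.add_sub_cancel' h)

lemma finite_setOf_mul_eq_Δ_pow (C : ℕ) : {b : B3P | ∃ c, b * c = Δ ^ C}.Finite := by
  refine ((List.finite_length_le (Fin 2) (3 * C)).image mkw).subset ?_
  rintro b ⟨c, hc⟩
  obtain ⟨w, rfl⟩ := mkw_surjective b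
  obtain ⟨v, rfl⟩ := mkw_surjective c
  refine ⟨w, ?_, rfl⟩
  have hlen := congrArg (fun b => (expSum (ι b)).toAdd) hc
  simp only [← mkw_append, Δ, map_pow, toAdd_pow, toAdd_expSum_ι_mkw, List.length_append,
    List.length_cons, List.length_nil, nsmul_eq_mul] at hlen
  show w.length ≤ 3 * C
  omega

/- König's lemma, through a non-principal ultrafilter on the lengths. -/
theorem exists_chain_of_forall_finite_chain {X : Type*} {S : ℕ → Set X} (hS : ∀ t, (S t).Finite)
    (R : X → X → Prop)
    (h : ∀ m, ∃ a : ℕ → X, (∀ t ≤ m, a t ∈ S t) ∧ ∀ t < m, R (a (t + 1)) (a t)) :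
    ∃ d : ℕ → X, ∀ t, R (d (t + 1)) (d t) := by
  choose a haS haR using h
  let U : Ultrafilter ℕ := Filter.hyperfilter ℕ
  have hge (t : ℕ) : ∀ᶠ m in U, t ≤ m :=
    Filter.hyperfilter_le_cofinite (Nat.cofinite_eq_atTop ▸ Filter.eventually_ge_atTop t)
  have hlim (t : ℕ) : ∃ x, ∀ᶠ m in U, a m t = x := by
    obtain ⟨x, -, hx⟩ := Ultrafilter.eq_pure_of_finite_mem (f := U.map (a · t)) (hS t)
      ((hge t).mono fun m hm => haS m t hm)
    exact ⟨x, Ultrafilter.mem_map.1 (hx ▸ rfl : {x} ∈ U.map (a · t))⟩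
  choose d hd using hlim
  refine ⟨d, fun t => ?_⟩
  obtain ⟨m, hm, hm', htm⟩ := ((hd t).and ((hd (t + 1)).and (hge (t + 1)))).exists
  exact hm ▸ hm' ▸ haR m t htm

/-- The principle WO_f : for each k there is m such that every (k, f)-simple strictly
descending sequence in B₃⁺ has length less than m. -/
theorem WO_f (f : ℕ → ℕ) (k : ℕ) :
    ∃ m : ℕ, ∀ (bs : ℕ → B3P) (m' : ℕ),
      (∀ t, t ≤ m' → compl (bs t) ≤ k + f t) →
      (∀ t, t < m' → blt (bs (t + 1)) (bs t)) → m' < m := by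
  by_contra! h
  obtain ⟨d, hd⟩ := exists_chain_of_forall_finite_chain
    (fun t => finite_setOf_mul_eq_Δ_pow (k + f t)) blt fun m => by
      obtain ⟨bs, m', hcompl, hdesc, hm⟩ := h m
      exact ⟨bs, fun t ht => mul_eq_Δ_pow_of_compl_le (hcompl t (ht.trans hm)),
        fun t ht => hdesc t (ht.trans_le hm)⟩
  exact (wellFounded_iff_isEmpty_descending_chain.1 wellFounded_blt).false ⟨d, hd⟩

end Braid3
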